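/- arXiv:math/0310081 — 7 statements merged into one kernel-verified Lean document; each statement's English description precedes it below -/
import Mathlib

section
/- Let C, Z_1, ..., Z_n ∈ B(H) satisfy ‖Ch‖² + ∑_{i=1}^n ‖Z_i h‖² ≤ ‖h‖² for all h ∈ H. Then for every k ≥ 0, ∑_{|α|=k} ‖C Z_α h‖² ≤ ∑_{|α|=k} ‖Z_α h‖² − ∑_{|β|=k+1} ‖Z_β h‖², where the sums are over words α of length k (resp. k+1) in the free semigroup on n generators and Z_α denotes the corresponding product. -/
/-! Apply the hypothesis to `Z_α h` for each word `α` of length `k` and sum over `α`: since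
every word of length `k + 1` is uniquely `g_i α`, with `Z_{g_i α} = Z_i Z_α`, the sum of the
`‖Z_i Z_α h‖²` is the sum over all words of length `k + 1`. -/

/-- `Z_α := Z_{i_1} ⋯ Z_{i_k}` for a word `α = g_{i_1} ⋯ g_{i_k}` in the free
semigroup on `n` generators (`Z_∅ = I`). -/
noncomputable def wordProd {H : Type*} [NormedAddCommGroup H] [NormedSpace ℂ H]
    {n : ℕ} (Z : Fin n → H →L[ℂ] H) (α : List (Fin n)) : H →L[ℂ] H :=
  (α.map Z).prod

section WordProd

variable {H : Type*} [NormedAddCommGroup H] [NormedSpace ℂ H] {n : ℕ} (Z : Fin n → H →L[ℂ] H)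

theorem wordProd_ofFn_cons {k : ℕ} (i : Fin n) (α : Fin k → Fin n) :
    wordProd Z (List.ofFn (Fin.cons i α)) = Z i * wordProd Z (List.ofFn α) := by
  simp [wordProd, List.ofFn_succ]

theorem sum_wordProd_ofFn_succ {M : Type*} [AddCommMonoid M] (f : (H →L[ℂ] H) → M) (k : ℕ) :
    ∑ β : Fin (k + 1) → Fin n, f (wordProd Z (List.ofFn β)) =
      ∑ α : Fin k → Fin n, ∑ i, f (Z i * wordProd Z (List.ofFn α)) := by
  calc ∑ β : Fin (k + 1) → Fin n, f (wordProd Z (List.ofFn β))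
      = ∑ p : Fin n × (Fin k → Fin n), f (wordProd Z (List.ofFn (Fin.cons p.1 p.2))) :=
        (Fintype.sum_equiv (Fin.consEquiv fun _ ↦ Fin n) _ _ fun _ ↦ rfl).symm
    _ = ∑ i, ∑ α : Fin k → Fin n, f (Z i * wordProd Z (List.ofFn α)) := by
        simp only [wordProd_ofFn_cons, Fintype.sum_prod_type]
    _ = ∑ α : Fin k → Fin n, ∑ i, f (Z i * wordProd Z (List.ofFn α)) := Finset.sum_comm

end WordProd

/-- If `‖Ch‖² + ∑ ‖Z_i h‖² ≤ ‖h‖²` for all `h`, then for every `k ≥ 0`,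
`∑_{|α|=k} ‖C Z_α h‖² ≤ ∑_{|α|=k} ‖Z_α h‖² − ∑_{|β|=k+1} ‖Z_β h‖²`. -/
theorem wordProd_contraction_step
    {H : Type*} [NormedAddCommGroup H] [InnerProductSpace ℂ H]
    {n : ℕ} (C : H →L[ℂ] H) (Z : Fin n → H →L[ℂ] H)
    (hc : ∀ h : H, ‖C h‖ ^ 2 + ∑ i, ‖Z i h‖ ^ 2 ≤ ‖h‖ ^ 2)
    (k : ℕ) (h : H) :
    ∑ α : Fin k → Fin n, ‖C (wordProd Z (List.ofFn α) h)‖ ^ 2 ≤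
      ∑ α : Fin k → Fin n, ‖wordProd Z (List.ofFn α) h‖ ^ 2 -
        ∑ β : Fin (k + 1) → Fin n, ‖wordProd Z (List.ofFn β) h‖ ^ 2 := by
  rw [sum_wordProd_ofFn_succ Z (fun T ↦ ‖T h‖ ^ 2), ← Finset.sum_sub_distrib]
  refine Finset.sum_le_sum fun α _ ↦ ?_
  have := hc (wordProd Z (List.ofFn α) h)
  simp only [mul_apply_eq_comp]
  linarith
end

section
/- Let C, Z_1, ..., Z_n ∈ B(H) satisfy ‖Ch‖² + ∑_{i=1}^n ‖Z_i h‖² ≤ ‖h‖² for all h ∈ H. Then for every h ∈ H and every m ≥ 0, ∑_{k=0}^m ∑_{|α|=k} ‖C Z_α h‖² ≤ ‖h‖², where the inner sum is over all words of length k in the free semigroup on n generators. -/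
/-!
Write `S_k h = ∑_{|α| = k} ‖Z_α h‖²`. Applying the hypothesis to each vector `Z_α h` with
`|α| = k` and summing gives `∑_{|α| = k} ‖C Z_α h‖² + S_{k+1} h ≤ S_k h`, so the partial sums
telescope to at most `S_0 h - S_{m+1} h ≤ ‖h‖²`.
-/

open Finset

section WordSums

variable {H : Type*} [NormedAddCommGroup H] [NormedSpace ℂ H] {n : ℕ} (Z : Fin n → H →L[ℂ] H)

lemma wordProd_cons (i : Fin n) (α : List (Fin n)) :
    wordProd Z (i :: α) = Z i * wordProd Z α := by
  simp [wordProd]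

lemma sum_wordProd_succ {M : Type*} [AddCommMonoid M] (f : H → M) (h : H) (k : ℕ) :
    ∑ β : Fin (k + 1) → Fin n, f (wordProd Z (List.ofFn β) h)
      = ∑ α : Fin k → Fin n, ∑ i, f (Z i (wordProd Z (List.ofFn α) h)) := by
  rw [← (Fin.consEquiv fun _ => Fin n).sum_comp, Fintype.sum_prod_type, sum_comm]
  simp [Fin.consEquiv, List.ofFn_succ, wordProd_cons]

noncomputable def wordSqNormSum (k : ℕ) (h : H) : ℝ :=
  ∑ α : Fin k → Fin n, ‖wordProd Z (List.ofFn α) h‖ ^ 2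

lemma wordSqNormSum_zero (h : H) : wordSqNormSum Z 0 h = ‖h‖ ^ 2 := by
  simp [wordSqNormSum, wordProd]

lemma wordSqNormSum_nonneg (k : ℕ) (h : H) : 0 ≤ wordSqNormSum Z k h :=
  sum_nonneg fun _ _ => by positivity

lemma sum_sq_norm_comp_wordProd_add_wordSqNormSum_succ_le {C : H →L[ℂ] H}
    (hc : ∀ h : H, ‖C h‖ ^ 2 + ∑ i, ‖Z i h‖ ^ 2 ≤ ‖h‖ ^ 2) (k : ℕ) (h : H) :
    ∑ α : Fin k → Fin n, ‖C (wordProd Z (List.ofFn α) h)‖ ^ 2 + wordSqNormSum Z (k + 1) h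
      ≤ wordSqNormSum Z k h := by
  rw [wordSqNormSum, sum_wordProd_succ Z (‖·‖ ^ 2), ← sum_add_distrib]
  exact sum_le_sum fun α _ => hc _

end WordSums

/-- If `‖Ch‖² + ∑ ‖Z_i h‖² ≤ ‖h‖²` for all `h`, then for every `h` and every `m ≥ 0`,
`∑_{k=0}^m ∑_{|α|=k} ‖C Z_α h‖² ≤ ‖h‖²`. -/
theorem wordProd_contraction_partial_sums
    {H : Type*} [NormedAddCommGroup H] [InnerProductSpace ℂ H]
    {n : ℕ} (C : H →L[ℂ] H) (Z : Fin n → H →L[ℂ] H)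
    (hc : ∀ h : H, ‖C h‖ ^ 2 + ∑ i, ‖Z i h‖ ^ 2 ≤ ‖h‖ ^ 2)
    (h : H) (m : ℕ) :
    ∑ k ∈ Finset.range (m + 1), ∑ α : Fin k → Fin n,
      ‖C (wordProd Z (List.ofFn α) h)‖ ^ 2 ≤ ‖h‖ ^ 2 := by
  calc ∑ k ∈ range (m + 1), ∑ α : Fin k → Fin n, ‖C (wordProd Z (List.ofFn α) h)‖ ^ 2
      ≤ ∑ k ∈ range (m + 1), (wordSqNormSum Z k h - wordSqNormSum Z (k + 1) h) :=
        sum_le_sum fun k _ => by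
          linarith [sum_sq_norm_comp_wordProd_add_wordSqNormSum_succ_le Z hc k h]
    _ = ‖h‖ ^ 2 - wordSqNormSum Z (m + 1) h := by
        rw [sum_range_sub', wordSqNormSum_zero]
    _ ≤ ‖h‖ ^ 2 := sub_le_self _ (wordSqNormSum_nonneg Z _ h)
end

section
/- Let C, Z_1, ..., Z_n ∈ B(H, K) and B(H) respectively satisfy ‖Ch‖² + ∑_{i=1}^n ‖Z_i h‖² ≤ ‖h‖² for all h. Then the map Λ : H → ℓ²(F_n^+; K) defined by (Λh)_α := C Z_{α̃} h (where α̃ is the reverse word of α) is a well-defined contraction. -/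
open scoped ENNReal

section aux
variable {H K : Type*} [NormedAddCommGroup H] [InnerProductSpace ℂ H]
    [NormedAddCommGroup K] [InnerProductSpace ℂ K] {n : ℕ}

lemma wordProd_nil (Z : Fin n → H →L[ℂ] H) : wordProd Z [] = 1 := rfl

lemma wordProd_cons_rev (Z : Fin n → H →L[ℂ] H) (i : Fin n) (t : List (Fin n)) (h : H) :
    wordProd Z (i :: t).reverse h = wordProd Z t.reverse (Z i h) := by
  simp [wordProd, List.map_append]

lemma sum_ofFn_succ (F : List (Fin n) → ℝ) (k : ℕ) :
    ∑ v : Fin (k+1) → Fin n, F (List.ofFn v)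
      = ∑ i : Fin n, ∑ w : Fin k → Fin n, F (i :: List.ofFn w) := by
  rw [← (Fin.consEquiv (fun _ : Fin (k+1) => Fin n)).sum_comp (fun v => F (List.ofFn v)),
    Fintype.sum_prod_type]
  refine Finset.sum_congr rfl fun i _ => Finset.sum_congr rfl fun w _ => ?_
  congr 1
  rw [List.ofFn_succ]
  rfl

lemma key_induction (C : H →L[ℂ] K) (Z : Fin n → H →L[ℂ] H)
    (hc : ∀ h : H, ‖C h‖ ^ 2 + ∑ i, ‖Z i h‖ ^ 2 ≤ ‖h‖ ^ 2) :
    ∀ (m : ℕ) (h : H),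
      (∑ k ∈ Finset.range m, ∑ v : Fin k → Fin n,
          ‖C (wordProd Z (List.ofFn v).reverse h)‖ ^ 2)
        + ∑ v : Fin m → Fin n, ‖wordProd Z (List.ofFn v).reverse h‖ ^ 2
      ≤ ‖h‖ ^ 2 := by
  intro m
  induction m with
  | zero =>
    intro h
    simp [wordProd_nil]
  | succ m ih =>
    intro h
    rw [Finset.sum_range_succ']
    have e0 : ∑ v : Fin 0 → Fin n, ‖C (wordProd Z (List.ofFn v).reverse h)‖ ^ 2
        = ‖C h‖ ^ 2 := by simp [wordProd_nil]
    have e1 : ∀ k (G : H → List (Fin n) → ℝ)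
        (hG : ∀ i t h', G h' (i :: t) = G (Z i h') t),
        ∑ v : Fin (k+1) → Fin n, G h (List.ofFn v)
          = ∑ i : Fin n, ∑ w : Fin k → Fin n, G (Z i h) (List.ofFn w) := by
      intro k G hG
      rw [sum_ofFn_succ (G h) k]
      exact Finset.sum_congr rfl fun i _ => Finset.sum_congr rfl fun w _ => hG i _ h
    have hA : ∀ k ∈ Finset.range m,
        ∑ v : Fin (k+1) → Fin n, ‖C (wordProd Z (List.ofFn v).reverse h)‖ ^ 2
          = ∑ i : Fin n, ∑ w : Fin k → Fin n,
              ‖C (wordProd Z (List.ofFn w).reverse (Z i h))‖ ^ 2 := fun k _ =>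
      e1 k (fun h' t => ‖C (wordProd Z t.reverse h')‖ ^ 2)
        (fun i t h' => by rw [wordProd_cons_rev])
    have hS : ∑ v : Fin (m+1) → Fin n, ‖wordProd Z (List.ofFn v).reverse h‖ ^ 2
        = ∑ i : Fin n, ∑ w : Fin m → Fin n,
            ‖wordProd Z (List.ofFn w).reverse (Z i h)‖ ^ 2 :=
      e1 m (fun h' t => ‖wordProd Z t.reverse h'‖ ^ 2)
        (fun i t h' => by rw [wordProd_cons_rev])
    rw [Finset.sum_congr rfl hA, hS, e0, Finset.sum_comm]
    have h1 : (∑ i : Fin n, ∑ k ∈ Finset.range m, ∑ w : Fin k → Fin n,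
          ‖C (wordProd Z (List.ofFn w).reverse (Z i h))‖ ^ 2)
        + ∑ i : Fin n, ∑ w : Fin m → Fin n,
            ‖wordProd Z (List.ofFn w).reverse (Z i h)‖ ^ 2
        ≤ ∑ i : Fin n, ‖Z i h‖ ^ 2 := by
      rw [← Finset.sum_add_distrib]
      exact Finset.sum_le_sum fun i _ => ih (Z i h)
    linarith [hc h]

lemma key_finset (C : H →L[ℂ] K) (Z : Fin n → H →L[ℂ] H)
    (hc : ∀ h : H, ‖C h‖ ^ 2 + ∑ i, ‖Z i h‖ ^ 2 ≤ ‖h‖ ^ 2) (h : H)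
    (s : Finset (List (Fin n))) :
    ∑ α ∈ s, ‖C (wordProd Z α.reverse h)‖ ^ 2 ≤ ‖h‖ ^ 2 := by
  classical
  obtain ⟨m, hm⟩ : ∃ m, ∀ α ∈ s, α.length < m := by
    refine ⟨(s.sup fun α => α.length) + 1, fun α hα => ?_⟩
    exact Nat.lt_succ_of_le (Finset.le_sup hα)
  have hsub : s ⊆ (Finset.range m).biUnion
      (fun k => Finset.univ.image fun v : Fin k → Fin n => List.ofFn v) := by
    intro α hα
    exact Finset.mem_biUnion.mpr ⟨α.length, Finset.mem_range.mpr (hm α hα),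
      Finset.mem_image.mpr ⟨α.get, Finset.mem_univ _, List.ofFn_get α⟩⟩
  calc ∑ α ∈ s, ‖C (wordProd Z α.reverse h)‖ ^ 2
      ≤ ∑ α ∈ (Finset.range m).biUnion
          (fun k => Finset.univ.image fun v : Fin k → Fin n => List.ofFn v),
          ‖C (wordProd Z α.reverse h)‖ ^ 2 :=
        Finset.sum_le_sum_of_subset_of_nonneg hsub (fun _ _ _ => by positivity)
    _ = ∑ k ∈ Finset.range m, ∑ α ∈ (Finset.univ.image
          fun v : Fin k → Fin n => List.ofFn v), ‖C (wordProd Z α.reverse h)‖ ^ 2 := by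
        refine Finset.sum_biUnion ?_
        intro a _ b _ hab
        refine Finset.disjoint_left.mpr ?_
        intro α hα hβ
        simp only [Finset.mem_image, Finset.mem_univ, true_and] at hα hβ
        obtain ⟨v, rfl⟩ := hα
        obtain ⟨w, hw⟩ := hβ
        apply hab
        have := congrArg List.length hw
        simpa using this.symm
    _ = ∑ k ∈ Finset.range m, ∑ v : Fin k → Fin n,
          ‖C (wordProd Z (List.ofFn v).reverse h)‖ ^ 2 := by
        refine Finset.sum_congr rfl fun k _ => ?_
        rw [Finset.sum_image]
        intro v _ w _ hvw
        exact List.ofFn_injective hvw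
    _ ≤ ‖h‖ ^ 2 := by
        have := key_induction C Z hc m h
        have hnn : 0 ≤ ∑ v : Fin m → Fin n, ‖wordProd Z (List.ofFn v).reverse h‖ ^ 2 := by
          positivity
        linarith

end aux

/-- If `‖Ch‖² + ∑ ‖Z_i h‖² ≤ ‖h‖²` for all `h`, then the map
`Λ : H → ℓ²(F_n^+; K)`, `(Λh)_α := C Z_{α̃} h` (where `α̃` is the reverse word),
is a well-defined contraction. -/
theorem exists_contraction_into_l2_of_column_contraction
    {H K : Type*} [NormedAddCommGroup H] [InnerProductSpace ℂ H]
    [NormedAddCommGroup K] [InnerProductSpace ℂ K]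
    {n : ℕ} (C : H →L[ℂ] K) (Z : Fin n → H →L[ℂ] H)
    (hc : ∀ h : H, ‖C h‖ ^ 2 + ∑ i, ‖Z i h‖ ^ 2 ≤ ‖h‖ ^ 2) :
    ∃ Λ : H →L[ℂ] lp (fun _ : List (Fin n) => K) 2,
      ‖Λ‖ ≤ 1 ∧ ∀ (h : H) (α : List (Fin n)), (Λ h : ∀ _ : List (Fin n), K) α
        = C (wordProd Z α.reverse h) := by
  have htwo : (2 : ℝ≥0∞).toReal = 2 := by norm_num
  have hrpow : ∀ (x : K), ‖x‖ ^ (2:ℝ≥0∞).toReal = ‖x‖ ^ 2 := by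
    intro x
    rw [htwo, Real.rpow_two]
  have hmem : ∀ h : H, Memℓp (fun α : List (Fin n) => C (wordProd Z α.reverse h)) 2 := by
    intro h
    apply memℓp_gen' (C := ‖h‖ ^ 2)
    intro s
    calc ∑ α ∈ s, ‖C (wordProd Z α.reverse h)‖ ^ (2:ℝ≥0∞).toReal
        = ∑ α ∈ s, ‖C (wordProd Z α.reverse h)‖ ^ 2 :=
          Finset.sum_congr rfl fun α _ => hrpow _
      _ ≤ ‖h‖ ^ 2 := key_finset C Z hc h s
  set Λ₀ : H →ₗ[ℂ] lp (fun _ : List (Fin n) => K) 2 :=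
    { toFun := fun h => ⟨fun α => C (wordProd Z α.reverse h), hmem h⟩
      map_add' := fun x y => by
        ext α
        simp
        rfl
      map_smul' := fun c x => by
        ext α
        simp }
  have hbound : ∀ h : H, ‖Λ₀ h‖ ≤ 1 * ‖h‖ := by
    intro h
    rw [one_mul]
    refine lp.norm_le_of_forall_sum_le (by norm_num) (norm_nonneg h) ?_
    intro s
    calc ∑ α ∈ s, ‖(Λ₀ h : ∀ _ : List (Fin n), K) α‖ ^ (2:ℝ≥0∞).toReal
        = ∑ α ∈ s, ‖C (wordProd Z α.reverse h)‖ ^ 2 :=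
          Finset.sum_congr rfl fun α _ => hrpow _
      _ ≤ ‖h‖ ^ 2 := key_finset C Z hc h s
      _ = ‖h‖ ^ (2:ℝ≥0∞).toReal := by rw [htwo, Real.rpow_two]
  refine ⟨Λ₀.mkContinuous 1 hbound, Λ₀.mkContinuous_norm_le (by norm_num) hbound, ?_⟩
  intro h α
  rfl
end

section
/- Let Z := (Z_1,...,Z_n), Z_i ∈ B(Y), with joint spectral radius r(Z) < 1, and let A_α ∈ B(H, Y) for words α in F_n^+ satisfy ∑_α A_α* A_α ≤ c²·I. Then for each k, ‖∑_{|α|=k} Z_{α̃} A_α‖ ≤ c·‖∑_{|α|=k} Z_α Z_α*‖^{1/2}, and consequently the series ∑_{k=0}^∞ ∑_{|α|=k} Z_{α̃} A_α converges in operator norm. -/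
lemma ofFn_rev' {n k : ℕ} (α : Fin k → Fin n) :
    List.ofFn (fun i => α i.rev) = (List.ofFn α).reverse := by
  apply List.ext_getElem
  · simp
  · intro i h1 h2
    simp [List.getElem_reverse, Fin.rev]
    congr 1
    apply Fin.ext
    simp
    omega

/-- Reversal of words of length `k`, as an equivalence. -/
def revEquiv {n k : ℕ} : (Fin k → Fin n) ≃ (Fin k → Fin n) where
  toFun α := fun i => α i.rev
  invFun α := fun i => α i.rev
  left_inv α := by funext i; simp
  right_inv α := by funext i; simp

open ContinuousLinearMap in
/-- Row contraction estimate: `‖∑ T_i x_i‖ ≤ ‖∑ T_i T_i*‖^{1/2} (∑ ‖x_i‖²)^{1/2}`. -/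
lemma rowbound {Y : Type*} [NormedAddCommGroup Y] [InnerProductSpace ℂ Y] [CompleteSpace Y]
    {ι : Type*} [Fintype ι] (T : ι → Y →L[ℂ] Y) (x : ι → Y) :
    ‖∑ i, T i (x i)‖ ≤
      Real.sqrt ‖∑ i, T i ∘L adjoint (T i)‖ * Real.sqrt (∑ i, ‖x i‖ ^ 2) := by
  classical
  set v := ∑ i, T i (x i) with hv
  set S := ∑ i, T i ∘L adjoint (T i) with hS
  rcases eq_or_ne v 0 with h0 | h0
  · rw [h0]; simp; positivity
  have key : ∑ i, ‖(adjoint (T i)) v‖ ^ 2 ≤ ‖S‖ * ‖v‖ ^ 2 := by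
    have e1 : ∑ i, ‖(adjoint (T i)) v‖ ^ 2 = RCLike.re (inner ℂ v (S v) : ℂ) := by
      rw [hS]
      simp only [ContinuousLinearMap.sum_apply, inner_sum, map_sum,
        ContinuousLinearMap.coe_comp', Function.comp_apply]
      refine Finset.sum_congr rfl fun i _ => ?_
      rw [← inner_self_eq_norm_sq (𝕜 := ℂ)]
      congr 1
      rw [ContinuousLinearMap.adjoint_inner_left]
    rw [e1]
    calc RCLike.re (inner ℂ v (S v) : ℂ) ≤ ‖(inner ℂ v (S v) : ℂ)‖ := RCLike.re_le_norm _
      _ ≤ ‖v‖ * ‖S v‖ := norm_inner_le_norm _ _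
      _ ≤ ‖v‖ * (‖S‖ * ‖v‖) := by
          gcongr
          exact S.le_opNorm v
      _ = ‖S‖ * ‖v‖ ^ 2 := by ring
  have main : ‖v‖ ^ 2 ≤ Real.sqrt ‖S‖ * ‖v‖ * Real.sqrt (∑ i, ‖x i‖ ^ 2) := by
    have e2 : (‖v‖ : ℝ) ^ 2 = RCLike.re (inner ℂ v v : ℂ) := (inner_self_eq_norm_sq v).symm
    have e3 : (inner ℂ v v : ℂ) = ∑ i, inner ℂ ((adjoint (T i)) v) (x i) := by
      conv_lhs => rw [hv, inner_sum]
      refine Finset.sum_congr rfl fun i _ => ?_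
      rw [ContinuousLinearMap.adjoint_inner_left]
    calc ‖v‖ ^ 2 = RCLike.re (inner ℂ v v : ℂ) := e2
      _ ≤ ‖(inner ℂ v v : ℂ)‖ := RCLike.re_le_norm _
      _ = ‖∑ i, (inner ℂ ((adjoint (T i)) v) (x i) : ℂ)‖ := by rw [e3]
      _ ≤ ∑ i, ‖(inner ℂ ((adjoint (T i)) v) (x i) : ℂ)‖ := norm_sum_le _ _
      _ ≤ ∑ i, ‖(adjoint (T i)) v‖ * ‖x i‖ := by
          gcongr with i _; exact norm_inner_le_norm _ _
      _ ≤ Real.sqrt (∑ i, ‖(adjoint (T i)) v‖ ^ 2) * Real.sqrt (∑ i, ‖x i‖ ^ 2) :=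
          Real.sum_mul_le_sqrt_mul_sqrt _ _ _
      _ ≤ Real.sqrt (‖S‖ * ‖v‖ ^ 2) * Real.sqrt (∑ i, ‖x i‖ ^ 2) := by
          gcongr
      _ = Real.sqrt ‖S‖ * ‖v‖ * Real.sqrt (∑ i, ‖x i‖ ^ 2) := by
          rw [Real.sqrt_mul (norm_nonneg _), Real.sqrt_sq (norm_nonneg _)]
  have hvpos : 0 < ‖v‖ := norm_pos_iff.mpr h0
  nlinarith [Real.sqrt_nonneg ‖S‖, Real.sqrt_nonneg (∑ i, ‖x i‖ ^ 2)]

/-- Let `Z := (Z_1,...,Z_n)` have joint spectral radius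
`r(Z) := lim_k ‖∑_{|α|=k} Z_α Z_α*‖^{1/(2k)} < 1`, and let `A_α ∈ B(H, Y)`
satisfy `∑_α A_α* A_α ≤ c²·I`.  Then for each `k`,
`‖∑_{|α|=k} Z_{α̃} A_α‖ ≤ c · ‖∑_{|α|=k} Z_α Z_α*‖^{1/2}`, and the series
`∑_k ∑_{|α|=k} Z_{α̃} A_α` converges in operator norm. -/
theorem evaluation_series_converges
    {Y H : Type*} [NormedAddCommGroup Y] [InnerProductSpace ℂ Y] [CompleteSpace Y]
    [NormedAddCommGroup H] [InnerProductSpace ℂ H] [CompleteSpace H]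
    {n : ℕ} (Z : Fin n → Y →L[ℂ] Y)
    (hsr : ∃ L : ℝ, L < 1 ∧
      Filter.Tendsto
        (fun k : ℕ =>
          ‖∑ α : Fin (k + 1) → Fin n,
              wordProd Z (List.ofFn α) ∘L
                ContinuousLinearMap.adjoint (wordProd Z (List.ofFn α))‖
            ^ (1 / (2 * ((k : ℝ) + 1))))
        Filter.atTop (nhds L))
    (A : List (Fin n) → H →L[ℂ] Y) (c : ℝ) (hc : 0 ≤ c)
    (hA : ∀ (h : H) (F : Finset (List (Fin n))),
      ∑ α ∈ F, ‖A α h‖ ^ 2 ≤ c ^ 2 * ‖h‖ ^ 2) :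
    (∀ k : ℕ,
      ‖∑ α : Fin k → Fin n, wordProd Z (List.ofFn α).reverse ∘L A (List.ofFn α)‖
        ≤ c * Real.sqrt
            ‖∑ α : Fin k → Fin n,
                wordProd Z (List.ofFn α) ∘L
                  ContinuousLinearMap.adjoint (wordProd Z (List.ofFn α))‖) ∧
    ∃ S : H →L[ℂ] Y,
      Filter.Tendsto
        (fun m : ℕ => ∑ k ∈ Finset.range m,
          ∑ α : Fin k → Fin n, wordProd Z (List.ofFn α).reverse ∘L A (List.ofFn α))
        Filter.atTop (nhds S) := by
  classical
  -- notation
  set term : ℕ → (H →L[ℂ] Y) := fun k =>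
    ∑ α : Fin k → Fin n, wordProd Z (List.ofFn α).reverse ∘L A (List.ofFn α) with hterm
  set a : ℕ → ℝ := fun k =>
    ‖∑ α : Fin k → Fin n,
        wordProd Z (List.ofFn α) ∘L
          ContinuousLinearMap.adjoint (wordProd Z (List.ofFn α))‖ with ha
  have ha0 : ∀ k, 0 ≤ a k := fun k => norm_nonneg _
  -- Part 1: the norm bound
  have bound : ∀ k : ℕ, ‖term k‖ ≤ c * Real.sqrt (a k) := by
    intro k
    have hM : 0 ≤ c * Real.sqrt (a k) := mul_nonneg hc (Real.sqrt_nonneg _)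
    refine ContinuousLinearMap.opNorm_le_bound _ hM (fun h => ?_)
    have happ : (term k) h =
        ∑ α : Fin k → Fin n, (wordProd Z (List.ofFn α).reverse) (A (List.ofFn α) h) := by
      rw [hterm]
      simp [ContinuousLinearMap.sum_apply]
    rw [happ]
    have hrow := rowbound (fun α : Fin k → Fin n => wordProd Z (List.ofFn α).reverse)
      (fun α => A (List.ofFn α) h)
    -- reindex the row norm via word reversal
    have hre : (∑ α : Fin k → Fin n,
        wordProd Z (List.ofFn α).reverse ∘L
          ContinuousLinearMap.adjoint (wordProd Z (List.ofFn α).reverse)) =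
        ∑ α : Fin k → Fin n,
          wordProd Z (List.ofFn α) ∘L
            ContinuousLinearMap.adjoint (wordProd Z (List.ofFn α)) := by
      refine Fintype.sum_equiv (revEquiv (n := n) (k := k)) _ _ (fun α => ?_)
      have : (List.ofFn α).reverse = List.ofFn (revEquiv α) := (ofFn_rev' α).symm
      rw [this]
    -- bound the column sum
    have hcol : ∑ α : Fin k → Fin n, ‖A (List.ofFn α) h‖ ^ 2 ≤ c ^ 2 * ‖h‖ ^ 2 := by
      have := hA h ((Finset.univ : Finset (Fin k → Fin n)).image List.ofFn)
      rwa [Finset.sum_image (fun α _ β _ hab => List.ofFn_injective hab)] at this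
    have hcol' : Real.sqrt (∑ α : Fin k → Fin n, ‖A (List.ofFn α) h‖ ^ 2) ≤ c * ‖h‖ := by
      have h2 : Real.sqrt (c ^ 2 * ‖h‖ ^ 2) = c * ‖h‖ := by
        rw [Real.sqrt_mul (by positivity), Real.sqrt_sq hc, Real.sqrt_sq (norm_nonneg _)]
      rw [← h2]
      exact Real.sqrt_le_sqrt hcol
    calc ‖∑ α : Fin k → Fin n, (wordProd Z (List.ofFn α).reverse) (A (List.ofFn α) h)‖
        ≤ Real.sqrt ‖∑ α : Fin k → Fin n,
              wordProd Z (List.ofFn α).reverse ∘L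
                ContinuousLinearMap.adjoint (wordProd Z (List.ofFn α).reverse)‖ *
            Real.sqrt (∑ α : Fin k → Fin n, ‖A (List.ofFn α) h‖ ^ 2) := hrow
      _ = Real.sqrt (a k) * Real.sqrt (∑ α : Fin k → Fin n, ‖A (List.ofFn α) h‖ ^ 2) := by
          rw [hre]
      _ ≤ Real.sqrt (a k) * (c * ‖h‖) :=
          mul_le_mul_of_nonneg_left hcol' (Real.sqrt_nonneg _)
      _ = c * Real.sqrt (a k) * ‖h‖ := by ring
  refine ⟨bound, ?_⟩
  -- Part 2: convergence
  obtain ⟨L, hL1, htend⟩ := hsr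
  set ρ : ℝ := (max L 0 + 1) / 2 with hρ
  have hρ0 : 0 ≤ ρ := by
    have : (0 : ℝ) ≤ max L 0 := le_max_right _ _
    rw [hρ]; linarith
  have hρ1 : ρ < 1 := by
    have : max L 0 < 1 := max_lt hL1 one_pos
    rw [hρ]; linarith
  have hLρ : L < ρ := by
    have : L ≤ max L 0 := le_max_left _ _
    rw [hρ]; linarith
  have hev : ∀ᶠ k in Filter.atTop,
      (a (k + 1)) ^ (1 / (2 * ((k : ℝ) + 1))) < ρ := htend.eventually_lt_const hLρ
  have hev2 : ∀ᶠ m in Filter.atTop, ‖term m‖ ≤ c * ρ ^ m := by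
    obtain ⟨N, hN⟩ := Filter.eventually_atTop.mp hev
    refine Filter.eventually_atTop.mpr ⟨N + 1, fun m hm => ?_⟩
    obtain ⟨k, rfl⟩ : ∃ k, m = k + 1 := ⟨m - 1, by omega⟩
    have hk : N ≤ k := by omega
    have h1 : (a (k + 1)) ^ (1 / (2 * ((k : ℝ) + 1))) < ρ := hN k hk
    have hsq : Real.sqrt (a (k + 1)) ≤ ρ ^ (k + 1) := by
      have hkpos : (0 : ℝ) < 2 * ((k : ℝ) + 1) := by positivity
      have e : Real.sqrt (a (k + 1)) =
          ((a (k + 1)) ^ (1 / (2 * ((k : ℝ) + 1)))) ^ (k + 1 : ℕ) := by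
        rw [← Real.rpow_natCast ((a (k + 1)) ^ (1 / (2 * ((k : ℝ) + 1)))) (k + 1),
          ← Real.rpow_mul (ha0 (k + 1))]
        rw [Real.sqrt_eq_rpow]
        congr 1
        push_cast
        field_simp
      rw [e]
      have hfnn : 0 ≤ (a (k + 1)) ^ (1 / (2 * ((k : ℝ) + 1))) :=
        Real.rpow_nonneg (ha0 (k + 1)) _
      exact pow_le_pow_left₀ hfnn h1.le _
    calc ‖term (k + 1)‖ ≤ c * Real.sqrt (a (k + 1)) := bound (k + 1)
      _ ≤ c * ρ ^ (k + 1) := by gcongr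
  have hg : Summable (fun m : ℕ => c * ρ ^ m) :=
    (summable_geometric_of_lt_one hρ0 hρ1).mul_left c
  have hsum : Summable term :=
    Summable.of_norm_bounded_eventually_nat hg hev2
  exact ⟨∑' m, term m, hsum.hasSum.tendsto_sum_nat⟩
end

section
/- Let Z := (Z_1,...,Z_n) in B(Y) with joint spectral radius r(Z) < 1 and C ∈ B(H, Y). Then the controllability grammian G := ∑_{k=0}^∞ ∑_{|α|=k} Z_α C C* Z_α* converges in norm and satisfies the Lyapunov equation G = ∑_{i=1}^n Z_i G Z_i* + CC*. -/
open Filter Topology ContinuousLinearMap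

theorem CStarAlgebra.norm_sum_mul_mul_star_le {A ι : Type*} [NonUnitalCStarAlgebra A]
    [PartialOrder A] [StarOrderedRing A] (s : Finset ι) (a : ι → A) {m : A} (hm : 0 ≤ m) :
    ‖∑ i ∈ s, a i * m * star (a i)‖ ≤ ‖m‖ * ‖∑ i ∈ s, a i * star (a i)‖ := by
  have hle : ∑ i ∈ s, a i * m * star (a i) ≤ ‖m‖ • ∑ i ∈ s, a i * star (a i) := by
    rw [Finset.smul_sum]
    exact Finset.sum_le_sum fun i _ => star_right_conjugate_le_norm_smul
  have hnonneg : 0 ≤ ∑ i ∈ s, a i * m * star (a i) :=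
    Finset.sum_nonneg fun i _ => star_right_conjugate_nonneg hm (a i)
  calc ‖∑ i ∈ s, a i * m * star (a i)‖ ≤ ‖‖m‖ • ∑ i ∈ s, a i * star (a i)‖ :=
        norm_le_norm_of_nonneg_of_le hnonneg hle
    _ = ‖m‖ * ‖∑ i ∈ s, a i * star (a i)‖ := by rw [norm_smul, norm_norm]

theorem summable_of_tendsto_rpow_one_div_two_mul_lt_one {u : ℕ → ℝ} (hu : ∀ k, 0 ≤ u k)
    {L : ℝ} (hL : L < 1)
    (h : Tendsto (fun k : ℕ => u k ^ (1 / (2 * ((k : ℝ) + 1)))) atTop (𝓝 L)) :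
    Summable u := by
  obtain ⟨ρ, hρ, hρ1⟩ := exists_between (max_lt hL zero_lt_one)
  have hρ0 : 0 ≤ ρ := (le_max_right L 0).trans hρ.le
  refine (summable_geometric_of_lt_one hρ0 hρ1).of_norm_bounded_eventually_nat ?_
  filter_upwards [h.eventually_lt_const ((le_max_left L 0).trans_lt hρ)] with k hk
  have hroot : u k ≤ ρ ^ (2 * (k + 1)) := by
    rw [one_div] at hk
    exact_mod_cast (Real.rpow_inv_le_iff_of_pos (hu k) hρ0 (by positivity)).mp hk.le
  calc ‖u k‖ = u k := Real.norm_of_nonneg (hu k)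
    _ ≤ ρ ^ (2 * (k + 1)) := hroot
    _ ≤ ρ ^ k := pow_le_pow_of_le_one hρ0 hρ1.le (by omega)

theorem HasSum.eq_apply_add {𝕜 E : Type*} [NontriviallyNormedField 𝕜]
    [NormedAddCommGroup E] [NormedSpace 𝕜 E] {Φ : E →L[𝕜] E} {x g : E}
    (h : HasSum (fun k => (Φ ^ k) x) g) : g = Φ g + x := by
  have hshift : HasSum (fun k => (Φ ^ (k + 1)) x) (Φ g) := by
    simpa only [pow_succ', mul_apply_eq_comp] using Φ.hasSum h
  have htail : HasSum (fun k => (Φ ^ (k + 1)) x) (g - x) := by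
    simpa using (hasSum_nat_add_iff' 1).mpr h
  rw [hshift.unique htail, sub_add_cancel]

section conjSum

variable (𝕜 : Type*) {A ι : Type*} [NontriviallyNormedField 𝕜] [NormedRing A]
  [NormedAlgebra 𝕜 A] [StarRing A] [Fintype ι]

noncomputable def conjSum (a : ι → A) : A →L[𝕜] A :=
  ∑ i, mulLeftRight 𝕜 A (a i) (star (a i))

variable {𝕜}

theorem conjSum_apply (a : ι → A) (x : A) : conjSum 𝕜 a x = ∑ i, a i * x * star (a i) := by
  simp [conjSum, sum_apply, mulLeftRight_apply]

theorem conjSum_pow_apply (a : ι → A) (k : ℕ) (x : A) :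
    (conjSum 𝕜 a ^ k) x =
      ∑ w : Fin k → ι, ((List.ofFn w).map a).prod * x * star ((List.ofFn w).map a).prod := by
  induction k with
  | zero => simp
  | succ k ih =>
    rw [pow_succ', mul_apply_eq_comp, ih, conjSum_apply,
      ← (Fin.consEquiv fun _ => ι).sum_comp, Fintype.sum_prod_type]
    simp only [Fin.consEquiv, Equiv.coe_fn_mk, List.ofFn_cons, List.map_cons, List.prod_cons,
      star_mul, Finset.mul_sum, Finset.sum_mul, mul_assoc]

end conjSum

/-- Let `Z := (Z_1,...,Z_n)` have joint spectral radius `r(Z) < 1` and `C ∈ B(H, Y)`.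
Then the controllability grammian `G := ∑_k ∑_{|α|=k} Z_α C C* Z_α*` converges in norm
and satisfies the Lyapunov equation `G = ∑_i Z_i G Z_i* + CC*`. -/
theorem grammian_converges_and_lyapunov
    {Y H : Type*} [NormedAddCommGroup Y] [InnerProductSpace ℂ Y] [CompleteSpace Y]
    [NormedAddCommGroup H] [InnerProductSpace ℂ H] [CompleteSpace H]
    {n : ℕ} (Z : Fin n → Y →L[ℂ] Y)
    (hsr : ∃ L : ℝ, L < 1 ∧
      Filter.Tendsto
        (fun k : ℕ =>
          ‖∑ α : Fin (k + 1) → Fin n,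
              wordProd Z (List.ofFn α) ∘L
                ContinuousLinearMap.adjoint (wordProd Z (List.ofFn α))‖
            ^ (1 / (2 * ((k : ℝ) + 1))))
        Filter.atTop (nhds L))
    (C : H →L[ℂ] Y) :
    ∃ G : Y →L[ℂ] Y,
      Filter.Tendsto
        (fun m : ℕ => ∑ k ∈ Finset.range m,
          ∑ α : Fin k → Fin n,
            wordProd Z (List.ofFn α) ∘L (C ∘L ContinuousLinearMap.adjoint C) ∘L
              ContinuousLinearMap.adjoint (wordProd Z (List.ofFn α)))
        Filter.atTop (nhds G) ∧
      G = (∑ i, Z i ∘L G ∘L ContinuousLinearMap.adjoint (Z i)) +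
            C ∘L ContinuousLinearMap.adjoint C := by
  obtain ⟨L, hL, hroot⟩ := hsr
  have hterm : ∀ k, ∑ α : Fin k → Fin n, wordProd Z (List.ofFn α) ∘L (C ∘L adjoint C) ∘L
      adjoint (wordProd Z (List.ofFn α)) = (conjSum ℂ Z ^ k) (C ∘L adjoint C) := fun k => by
    simp only [conjSum_pow_apply, wordProd, mul_def, star_eq_adjoint, comp_assoc]
  have hCC : 0 ≤ C ∘L adjoint C := (nonneg_iff_isPositive _).mpr (isPositive_self_comp_adjoint C)
  have hsummable : Summable fun k => (conjSum ℂ Z ^ k) (C ∘L adjoint C) := by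
    rw [← summable_nat_add_iff 1]
    refine .of_norm_bounded
      ((summable_of_tendsto_rpow_one_div_two_mul_lt_one (fun _ => norm_nonneg _) hL
        hroot).mul_left ‖C ∘L adjoint C‖) fun k => ?_
    have hbound := CStarAlgebra.norm_sum_mul_mul_star_le Finset.univ
      (fun α : Fin (k + 1) → Fin n => ((List.ofFn α).map Z).prod) hCC
    rw [conjSum_pow_apply]
    simpa only [wordProd, mul_def, star_eq_adjoint] using hbound
  obtain ⟨G, hG⟩ := hsummable
  refine ⟨G, by simpa only [hterm] using hG.tendsto_sum_nat, ?_⟩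
  simpa only [conjSum_apply, mul_def, star_eq_adjoint, comp_assoc] using hG.eq_apply_add
end

section
/- Let Z := (Z_1,...,Z_n) in B(Y) with r(Z) < 1 and C ∈ B(H, Y). The positive solution of the Lyapunov equation X = ∑_{i=1}^n Z_i X Z_i* + CC* is unique: if X ≥ 0 is another solution, then X = ∑_{k=0}^∞ ∑_{|α|=k} Z_α CC* Z_α*. -/
/-!
Writing `Φ T = ∑ i, Z i T (Z i)*`, the equation reads `X = Φ X + CC*`; iterating it gives
`X = ∑_{k<m} Φ^k (CC*) + Φ^m X`, and `Φ^k T = ∑_{|α|=k} Z_α T Z_α*`. By Cauchy–Schwarz over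
the words, `‖Φ^m X‖ ≤ ‖X‖ ‖∑_{|α|=m} Z_α Z_α*‖`, which decays geometrically since `r(Z) < 1`.
-/

open ContinuousLinearMap Filter Topology
open scoped InnerProductSpace

section Conjugation

variable {𝕜 E F ι : Type*} [RCLike 𝕜] [NormedAddCommGroup E] [InnerProductSpace 𝕜 E]
  [CompleteSpace E] [NormedAddCommGroup F] [InnerProductSpace 𝕜 F] [CompleteSpace F] [Fintype ι]

theorem sum_norm_adjoint_apply_sq_le (A : ι → E →L[𝕜] F) (y : F) :
    ∑ a, ‖adjoint (A a) y‖ ^ 2 ≤ ‖∑ a, A a ∘L adjoint (A a)‖ * ‖y‖ ^ 2 := by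
  set S := ∑ a, A a ∘L adjoint (A a)
  have hS : ∑ a, ‖adjoint (A a) y‖ ^ 2 = RCLike.re ⟪S y, y⟫_𝕜 := by
    simp only [S, sum_apply, sum_inner, map_sum, apply_norm_sq_eq_inner_adjoint_left,
      adjoint_adjoint]
  calc ∑ a, ‖adjoint (A a) y‖ ^ 2 = RCLike.re ⟪S y, y⟫_𝕜 := hS
    _ ≤ ‖S y‖ * ‖y‖ := re_inner_le_norm _ _
    _ ≤ ‖S‖ * ‖y‖ * ‖y‖ := by gcongr; exact S.le_opNorm y
    _ = ‖S‖ * ‖y‖ ^ 2 := by ring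

theorem norm_sum_conj_le (A : ι → E →L[𝕜] F) (T : E →L[𝕜] E) :
    ‖∑ a, A a ∘L T ∘L adjoint (A a)‖ ≤ ‖T‖ * ‖∑ a, A a ∘L adjoint (A a)‖ := by
  set S := ∑ a, A a ∘L adjoint (A a)
  have hunit : ∀ y : F, ‖y‖ = 1 → √(∑ a, ‖adjoint (A a) y‖ ^ 2) ≤ √‖S‖ := fun y hy =>
    Real.sqrt_le_sqrt (by simpa [hy] using sum_norm_adjoint_apply_sq_le A y)
  refine opNorm_le_of_re_inner_le (by positivity) fun x y hx hy => ?_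
  calc RCLike.re ⟪(∑ a, A a ∘L T ∘L adjoint (A a)) x, y⟫_𝕜
      = RCLike.re (∑ a, ⟪T (adjoint (A a) x), adjoint (A a) y⟫_𝕜) := by
        simp only [sum_apply, sum_inner, comp_apply, adjoint_inner_right]
    _ ≤ ∑ a, ‖T‖ * ‖adjoint (A a) x‖ * ‖adjoint (A a) y‖ := by
        rw [map_sum]
        refine Finset.sum_le_sum fun a _ => (re_inner_le_norm _ _).trans ?_
        gcongr
        exact T.le_opNorm _
    _ = ‖T‖ * ∑ a, ‖adjoint (A a) x‖ * ‖adjoint (A a) y‖ := by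
        rw [Finset.mul_sum]; simp only [mul_assoc]
    _ ≤ ‖T‖ * (√‖S‖ * √‖S‖) := by
        gcongr
        exact (Real.sum_mul_le_sqrt_mul_sqrt _ _ _).trans
          (mul_le_mul (hunit x hx) (hunit y hy) (by positivity) (by positivity))
    _ = ‖T‖ * ‖S‖ := by rw [Real.mul_self_sqrt (norm_nonneg S)]

end Conjugation

theorem Module.End.eq_sum_pow_apply_add_pow_apply {R M : Type*} [Semiring R] [AddCommMonoid M]
    [Module R M] (f : Module.End R M) {x d : M} (h : x = f x + d) (m : ℕ) :
    x = ∑ k ∈ Finset.range m, (f ^ k) d + (f ^ m) x := by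
  induction m with
  | zero => simp
  | succ m ih =>
    calc x = ∑ k ∈ Finset.range m, (f ^ k) d + (f ^ m) (f x + d) := by rw [← h]; exact ih
      _ = ∑ k ∈ Finset.range (m + 1), (f ^ k) d + (f ^ (m + 1)) x := by
        rw [Finset.sum_range_succ, map_add, pow_succ, Module.End.mul_apply]; abel

theorem tendsto_zero_of_tendsto_rpow_one_div_mul_lt_one {u : ℕ → ℝ} (hu : ∀ k, 0 ≤ u k)
    {c L : ℝ} (hc : 0 < c) (hL : L < 1)
    (h : Tendsto (fun k : ℕ => u k ^ (1 / (c * ((k : ℝ) + 1)))) atTop (𝓝 L)) :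
    Tendsto u atTop (𝓝 0) := by
  obtain ⟨r, hLr, hr1⟩ := exists_between (max_lt hL one_pos)
  have hr0 : 0 ≤ r := (le_max_right L 0).trans hLr.le
  have hbound : ∀ᶠ k : ℕ in atTop, u k ≤ (r ^ c) ^ (k + 1) := by
    filter_upwards [h.eventually_lt_const ((le_max_left L 0).trans_lt hLr)] with k hk
    have hexp : 0 < c * ((k : ℝ) + 1) := by positivity
    calc u k = (u k ^ (1 / (c * ((k : ℝ) + 1)))) ^ (c * ((k : ℝ) + 1)) := by
          rw [one_div, Real.rpow_inv_rpow (hu k) hexp.ne']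
      _ ≤ r ^ (c * ((k : ℝ) + 1)) := Real.rpow_le_rpow (Real.rpow_nonneg (hu k) _) hk.le hexp.le
      _ = (r ^ c) ^ (k + 1) := by rw [Real.rpow_mul hr0, ← Real.rpow_natCast]; push_cast; rfl
  have hgeom : Tendsto (fun k : ℕ => (r ^ c) ^ (k + 1)) atTop (𝓝 0) :=
    (tendsto_pow_atTop_nhds_zero_of_lt_one (by positivity)
      (Real.rpow_lt_one hr0 hr1 hc)).comp (tendsto_add_atTop_nat 1)
  exact squeeze_zero' (Eventually.of_forall hu) hbound hgeom

section Lyapunov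

variable {Y : Type*} [NormedAddCommGroup Y] [InnerProductSpace ℂ Y] [CompleteSpace Y]

noncomputable def lyapunovMap {ι : Type*} [Fintype ι] (Z : ι → Y →L[ℂ] Y) :
    Module.End ℂ (Y →L[ℂ] Y) :=
  ∑ i, LinearMap.mulLeft ℂ (Z i) ∘ₗ LinearMap.mulRight ℂ (adjoint (Z i))

theorem lyapunovMap_apply {ι : Type*} [Fintype ι] (Z : ι → Y →L[ℂ] Y) (T : Y →L[ℂ] Y) :
    lyapunovMap Z T = ∑ i, Z i ∘L T ∘L adjoint (Z i) := by
  simp [lyapunovMap, LinearMap.sum_apply, mul_def]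

variable {n : ℕ}

theorem sum_wordProd_conj_eq_lyapunovMap_pow_apply (Z : Fin n → Y →L[ℂ] Y) (T : Y →L[ℂ] Y)
    (k : ℕ) :
    ∑ α : Fin k → Fin n, wordProd Z (List.ofFn α) ∘L T ∘L adjoint (wordProd Z (List.ofFn α)) =
      (lyapunovMap Z ^ k) T := by
  induction k with
  | zero => simp [wordProd, one_def, adjoint_id]
  | succ k ih =>
    rw [← (Fin.consEquiv fun _ => Fin n).sum_comp, Fintype.sum_prod_type, pow_succ',
      Module.End.mul_apply, ← ih, lyapunovMap_apply]
    refine Finset.sum_congr rfl fun i _ => ?_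
    simp [Fin.consEquiv, List.ofFn_succ, wordProd, mul_def, adjoint_comp, comp_finsetSum,
      finsetSum_comp, comp_assoc]

theorem norm_lyapunovMap_pow_apply_le (Z : Fin n → Y →L[ℂ] Y) (T : Y →L[ℂ] Y) (k : ℕ) :
    ‖(lyapunovMap Z ^ k) T‖ ≤
      ‖T‖ * ‖∑ α : Fin k → Fin n,
        wordProd Z (List.ofFn α) ∘L adjoint (wordProd Z (List.ofFn α))‖ := by
  rw [← sum_wordProd_conj_eq_lyapunovMap_pow_apply]
  exact norm_sum_conj_le _ T

theorem tendsto_lyapunovMap_pow_apply_zero (Z : Fin n → Y →L[ℂ] Y) (T : Y →L[ℂ] Y)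
    (hZ : Tendsto (fun k => ‖∑ α : Fin k → Fin n,
      wordProd Z (List.ofFn α) ∘L adjoint (wordProd Z (List.ofFn α))‖) atTop (𝓝 0)) :
    Tendsto (fun k => (lyapunovMap Z ^ k) T) atTop (𝓝 0) := by
  rw [tendsto_zero_iff_norm_tendsto_zero]
  refine squeeze_zero (fun _ => norm_nonneg _) (norm_lyapunovMap_pow_apply_le Z T) ?_
  simpa using hZ.const_mul ‖T‖

end Lyapunov

theorem lyapunov_positive_solution_unique_general
    {Y H : Type*} [NormedAddCommGroup Y] [InnerProductSpace ℂ Y] [CompleteSpace Y]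
    [NormedAddCommGroup H] [InnerProductSpace ℂ H] [CompleteSpace H]
    {n : ℕ} (Z : Fin n → Y →L[ℂ] Y)
    (hsr : ∃ L : ℝ, L < 1 ∧
      Filter.Tendsto
        (fun k : ℕ =>
          ‖∑ α : Fin (k + 1) → Fin n,
              wordProd Z (List.ofFn α) ∘L
                ContinuousLinearMap.adjoint (wordProd Z (List.ofFn α))‖
            ^ (1 / (2 * ((k : ℝ) + 1))))
        Filter.atTop (nhds L))
    (C : H →L[ℂ] Y) (X : Y →L[ℂ] Y)
    (hX : X = (∑ i, Z i ∘L X ∘L ContinuousLinearMap.adjoint (Z i)) +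
            C ∘L ContinuousLinearMap.adjoint C) :
    Filter.Tendsto
      (fun m : ℕ => ∑ k ∈ Finset.range m,
        ∑ α : Fin k → Fin n,
          wordProd Z (List.ofFn α) ∘L (C ∘L ContinuousLinearMap.adjoint C) ∘L
            ContinuousLinearMap.adjoint (wordProd Z (List.ofFn α)))
      Filter.atTop (nhds X) := by
  obtain ⟨L, hL, hlim⟩ := hsr
  have hwords_norm : Tendsto (fun k => ‖∑ α : Fin k → Fin n,
      wordProd Z (List.ofFn α) ∘L adjoint (wordProd Z (List.ofFn α))‖) atTop (𝓝 0) :=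
    (tendsto_add_atTop_iff_nat 1).mp <|
      tendsto_zero_of_tendsto_rpow_one_div_mul_lt_one (fun _ => norm_nonneg _) two_pos hL hlim
  have hremainder : Tendsto (fun m => (lyapunovMap Z ^ m) X) atTop (𝓝 0) :=
    tendsto_lyapunovMap_pow_apply_zero Z X hwords_norm
  have hpartial (m : ℕ) : ∑ k ∈ Finset.range m, ∑ α : Fin k → Fin n,
      wordProd Z (List.ofFn α) ∘L (C ∘L adjoint C) ∘L adjoint (wordProd Z (List.ofFn α)) =
        X - (lyapunovMap Z ^ m) X := by
    simp only [sum_wordProd_conj_eq_lyapunovMap_pow_apply]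
    rw [eq_sub_iff_add_eq, eq_comm]
    exact (lyapunovMap Z).eq_sum_pow_apply_add_pow_apply (by rwa [lyapunovMap_apply]) m
  simpa only [hpartial, sub_zero] using tendsto_const_nhds.sub hremainder

/-- Uniqueness of the positive solution of the Lyapunov equation: if `r(Z) < 1`,
`X ≥ 0` and `X = ∑_i Z_i X Z_i* + CC*`, then `X = ∑_k ∑_{|α|=k} Z_α CC* Z_α*`. -/
theorem lyapunov_positive_solution_unique
    {Y H : Type*} [NormedAddCommGroup Y] [InnerProductSpace ℂ Y] [CompleteSpace Y]
    [NormedAddCommGroup H] [InnerProductSpace ℂ H] [CompleteSpace H]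
    {n : ℕ} (Z : Fin n → Y →L[ℂ] Y)
    (hsr : ∃ L : ℝ, L < 1 ∧
      Filter.Tendsto
        (fun k : ℕ =>
          ‖∑ α : Fin (k + 1) → Fin n,
              wordProd Z (List.ofFn α) ∘L
                ContinuousLinearMap.adjoint (wordProd Z (List.ofFn α))‖
            ^ (1 / (2 * ((k : ℝ) + 1))))
        Filter.atTop (nhds L))
    (C : H →L[ℂ] Y) (X : Y →L[ℂ] Y) (hXpos : X.IsPositive)
    (hX : X = (∑ i, Z i ∘L X ∘L ContinuousLinearMap.adjoint (Z i)) +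
            C ∘L ContinuousLinearMap.adjoint C) :
    Filter.Tendsto
      (fun m : ℕ => ∑ k ∈ Finset.range m,
        ∑ α : Fin k → Fin n,
          wordProd Z (List.ofFn α) ∘L (C ∘L ContinuousLinearMap.adjoint C) ∘L
            ContinuousLinearMap.adjoint (wordProd Z (List.ofFn α)))
      Filter.atTop (nhds X) :=
  lyapunov_positive_solution_unique_general Z hsr C X hX
end

section
/- Let T := [T_1,...,T_n] be a row contraction on H, D_T := (I − T*T)^{1/2} on ⊕_{j=1}^n H, D := closure of the range of D_T, and define on K := H ⊕ (F²(H_n) ⊗ D) the operators V_i(h ⊕ ξ) := T_i h ⊕ (D_i h + (S_i ⊗ I_D)ξ), where D_i h := 1 ⊗ D_T(0,...,0,h,0,...) with h in the i-th slot. Then the V_i are isometries with pairwise orthogonal ranges: V_i* V_j = δ_{ij} I_K. -/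
/-!
Since `V_i† V_j` is determined by its matrix coefficients, it suffices to show
`⟪V_i x, V_j y⟫ = δ_ij ⟪x, y⟫`. For `x = h ⊕ ξ` and `y = k ⊕ η`, the Fock component of `V_i x`
is `D_T(h e_i)` at the empty word and `ξ` moved onto the words beginning with `i`, so its inner
product with the Fock component of `V_j y` is `⟪D_T(h e_i), D_T(k e_j)⟫ + δ_ij ⟪ξ, η⟫`.
As `D_T` is self-adjoint with `D_T² = I − T†T`, the first term is `δ_ij ⟪h, k⟫ − ⟪T_i h, T_j k⟫`,
which cancels against the `H`-component `⟪T_i h, T_j k⟫`.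
-/

set_option synthInstance.maxHeartbeats 1000000
set_option maxHeartbeats 1000000

noncomputable section

variable {n : ℕ} {H : Type*} [NormedAddCommGroup H] [InnerProductSpace ℂ H]
  [CompleteSpace H]

/-- `⊕_{j=1}^n H`, the Hilbert direct sum of `n` copies of `H`. -/
abbrev HilbPow (n : ℕ) (H : Type*) [NormedAddCommGroup H] [InnerProductSpace ℂ H] :=
  PiLp 2 (fun _ : Fin n => H)

/-- `D := closure of the range of D_T` in `⊕_{j=1}^n H`. -/
def Dsub (DT : HilbPow n H →L[ℂ] HilbPow n H) : Submodule ℂ (HilbPow n H) :=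
  (LinearMap.range (DT : HilbPow n H →ₗ[ℂ] HilbPow n H)).topologicalClosure

instance : CompleteSpace (HilbPow n H) :=
  inferInstance

instance (DT : HilbPow n H →L[ℂ] HilbPow n H) : CompleteSpace ↥(Dsub DT) :=
  IsClosed.completeSpace_coe (hs := Submodule.isClosed_topologicalClosure _)

/-- The canonical map `x ↦ D_T x ∈ D`. -/
def Dembed (DT : HilbPow n H →L[ℂ] HilbPow n H) (x : HilbPow n H) : ↥(Dsub DT) :=
  ⟨DT x, Submodule.le_topologicalClosure _ ⟨x, rfl⟩⟩

/-- `K := H ⊕ (F²(H_n) ⊗ D)`, where `F²(H_n) ⊗ D` is realized as `ℓ²(F_n^+; D)`. -/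
abbrev DilSpace (DT : HilbPow n H →L[ℂ] HilbPow n H) :=
  WithLp 2 (H × lp (fun _ : List (Fin n) => ↥(Dsub DT)) 2)

open scoped InnerProductSpace

theorem tsum_list_eq_add_tsum_of_apply_cons {ι M : Type*} [DecidableEq ι] [AddCommGroup M]
    [TopologicalSpace M] [IsTopologicalAddGroup M] [T2Space M] {f : List ι → M} (hf : Summable f)
    {i : ι} {g : List ι → M} (hcons : ∀ j α, f (j :: α) = if j = i then g α else 0) :
    ∑' α, f α = f [] + ∑' α, g α := by
  rw [hf.tsum_eq_add_tsum_ite [], ← tsum_extend_zero List.cons_injective g]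
  congr 1
  refine tsum_congr fun α => ?_
  rcases α with _ | ⟨j, α⟩
  · simp
  · rw [if_neg (List.cons_ne_nil j α), hcons]
    split_ifs with hj
    · rw [hj, List.cons_injective.extend_apply]
    · rw [Function.extend_apply' _ _ _ ?_, Pi.zero_apply]
      rintro ⟨β, hβ⟩
      exact hj (List.cons_eq_cons.1 hβ).1.symm

theorem lp_inner_eq_of_apply_cons {𝕜 ι E : Type*} [RCLike 𝕜] [DecidableEq ι]
    [NormedAddCommGroup E] [InnerProductSpace 𝕜 E] {a b ξ η : lp (fun _ : List ι => E) 2}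
    {i i' : ι} (ha : ∀ j α, a (j :: α) = if j = i then ξ α else 0)
    (hb : ∀ j α, b (j :: α) = if j = i' then η α else 0) :
    ⟪a, b⟫_𝕜 = ⟪a [], b []⟫_𝕜 + if i = i' then ⟪ξ, η⟫_𝕜 else 0 := by
  have hcons : ∀ j α, ⟪a (j :: α), b (j :: α)⟫_𝕜
      = if j = i then (if i = i' then ⟪ξ α, η α⟫_𝕜 else 0) else 0 := by
    intro j α
    rw [ha, hb]
    by_cases hj : j = i
    · subst hj
      by_cases hj' : j = i' <;> simp [hj']
    · simp [hj]
  rw [lp.inner_eq_tsum, tsum_list_eq_add_tsum_of_apply_cons (f := fun α => ⟪a α, b α⟫_𝕜)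
    (lp.summable_inner a b) hcons, lp.inner_eq_tsum]
  split_ifs <;> simp

theorem ContinuousLinearMap.adjoint_comp_eq_of_inner {𝕜 E F : Type*} [RCLike 𝕜]
    [NormedAddCommGroup E] [InnerProductSpace 𝕜 E] [CompleteSpace E]
    [NormedAddCommGroup F] [InnerProductSpace 𝕜 F] [CompleteSpace F]
    {A B : E →L[𝕜] F} {C : E →L[𝕜] E} (h : ∀ x y, ⟪A x, B y⟫_𝕜 = ⟪x, C y⟫_𝕜) :
    adjoint A ∘L B = C := by
  ext y
  refine ext_inner_left 𝕜 fun x => ?_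
  rw [comp_apply, adjoint_inner_right, h]

theorem PiLp.toLp_ite_eq_single {ι E : Type*} [DecidableEq ι] [AddCommGroup E] (i : ι) (h : E) :
    WithLp.toLp 2 (fun j => if j = i then h else 0) = PiLp.single 2 i h := by
  ext j
  rw [PiLp.single_apply]

theorem PiLp.inner_single_left {𝕜 ι E : Type*} [RCLike 𝕜] [Fintype ι] [DecidableEq ι]
    [NormedAddCommGroup E] [InnerProductSpace 𝕜 E] (i : ι) (h : E) (x : PiLp 2 fun _ : ι => E) :
    ⟪PiLp.single 2 i h, x⟫_𝕜 = ⟪h, x i⟫_𝕜 := by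
  rw [PiLp.inner_apply, Finset.sum_eq_single i]
  · rw [PiLp.single_apply, if_pos rfl]
  · intro j _ hj
    rw [PiLp.single_apply, if_neg hj, inner_zero_left]
  · exact fun hi => absurd (Finset.mem_univ i) hi

theorem inner_defect_apply_single {𝕜 ι E : Type*} [RCLike 𝕜] [Fintype ι] [DecidableEq ι]
    [NormedAddCommGroup E] [InnerProductSpace 𝕜 E] [CompleteSpace E] {T : ι → E →L[𝕜] E}
    {D : (PiLp 2 fun _ : ι => E) →L[𝕜] PiLp 2 fun _ : ι => E} (hD : IsSelfAdjoint D)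
    (hD2 : ∀ x i, D (D x) i = x i - ContinuousLinearMap.adjoint (T i) (∑ j, T j (x j)))
    (i j : ι) (h k : E) :
    ⟪D (PiLp.single 2 i h), D (PiLp.single 2 j k)⟫_𝕜
      = (if i = j then ⟪h, k⟫_𝕜 else 0) - ⟪T i h, T j k⟫_𝕜 := by
  have hsum : ∑ m, T m ((PiLp.single 2 j k : PiLp 2 fun _ : ι => E) m) = T j k := by
    simp [PiLp.single_apply, apply_ite]
  rw [← ContinuousLinearMap.adjoint_inner_right, hD.adjoint_eq, PiLp.inner_single_left, hD2,
    inner_sub_right, ContinuousLinearMap.adjoint_inner_right, hsum, PiLp.single_apply]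
  rcases eq_or_ne i j with rfl | hij
  · simp
  · simp [hij]

theorem inner_Dembed {m : ℕ} {E : Type*} [NormedAddCommGroup E] [InnerProductSpace ℂ E]
    (D : HilbPow m E →L[ℂ] HilbPow m E) (x y : HilbPow m E) :
    ⟪Dembed D x, Dembed D y⟫_ℂ = ⟪D x, D y⟫_ℂ :=
  rfl

theorem dilation_isometries_orthogonal_ranges_general
    (T : Fin n → H →L[ℂ] H)
    (DT : HilbPow n H →L[ℂ] HilbPow n H) (hDTpos : DT.IsPositive)
    (hDTsq : ∀ (x : HilbPow n H) (i : Fin n),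
      (DT (DT x)) i = x i - ContinuousLinearMap.adjoint (T i) (∑ j, T j (x j)))
    (V : Fin n → DilSpace DT →L[ℂ] DilSpace DT)
    (hV : ∀ (i : Fin n) (h : H) (ξ : lp (fun _ : List (Fin n) => ↥(Dsub DT)) 2),
      (WithLp.equiv 2 _ (V i ((WithLp.equiv 2 _).symm (h, ξ)))).1 = T i h ∧
      ((WithLp.equiv 2 _ (V i ((WithLp.equiv 2 _).symm (h, ξ)))).2 :
          ∀ _ : List (Fin n), ↥(Dsub DT)) []
        = Dembed DT ((WithLp.equiv 2 (∀ _ : Fin n, H)).symm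
            (fun j => if j = i then h else 0)) ∧
      ∀ (j : Fin n) (α : List (Fin n)),
        ((WithLp.equiv 2 _ (V i ((WithLp.equiv 2 _).symm (h, ξ)))).2 :
            ∀ _ : List (Fin n), ↥(Dsub DT)) (j :: α)
          = if j = i then (ξ : ∀ _ : List (Fin n), ↥(Dsub DT)) α else 0) :
    ∀ i j : Fin n,
      ContinuousLinearMap.adjoint (V i) ∘L V j = if i = j then 1 else 0 := by
  intro i j
  refine ContinuousLinearMap.adjoint_comp_eq_of_inner fun x y => ?_
  obtain ⟨h, ξ⟩ := x
  obtain ⟨k, η⟩ := y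
  simp only [WithLp.equiv_apply, WithLp.equiv_symm_apply] at hV
  obtain ⟨hVi_fst, hVi_nil, hVi_cons⟩ := hV i h ξ
  obtain ⟨hVj_fst, hVj_nil, hVj_cons⟩ := hV j k η
  rw [WithLp.prod_inner_apply, lp_inner_eq_of_apply_cons hVi_cons hVj_cons, hVi_fst, hVj_fst,
    hVi_nil, hVj_nil, inner_Dembed, PiLp.toLp_ite_eq_single, PiLp.toLp_ite_eq_single,
    inner_defect_apply_single hDTpos.isSelfAdjoint hDTsq]
  split_ifs with hij
  · subst hij
    rw [one_apply_eq_self, WithLp.prod_inner_apply]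
    ring
  · simp

/-- The operators of the Fock-space realization of the minimal isometric dilation of a
row contraction `T`, namely `V_i (h ⊕ ξ) := T_i h ⊕ (D_i h + (S_i ⊗ I_D) ξ)` with
`D_T = (I − T*T)^{1/2}`, are isometries with pairwise orthogonal ranges:
`V_i* V_j = δ_{ij} I_K`. -/
theorem dilation_isometries_orthogonal_ranges
    (T : Fin n → H →L[ℂ] H)
    (hrow : ∀ h : H, ∑ i, ‖ContinuousLinearMap.adjoint (T i) h‖ ^ 2 ≤ ‖h‖ ^ 2)
    (DT : HilbPow n H →L[ℂ] HilbPow n H) (hDTpos : DT.IsPositive)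
    (hDTsq : ∀ (x : HilbPow n H) (i : Fin n),
      (DT (DT x)) i = x i - ContinuousLinearMap.adjoint (T i) (∑ j, T j (x j)))
    (V : Fin n → DilSpace DT →L[ℂ] DilSpace DT)
    (hV : ∀ (i : Fin n) (h : H) (ξ : lp (fun _ : List (Fin n) => ↥(Dsub DT)) 2),
      (WithLp.equiv 2 _ (V i ((WithLp.equiv 2 _).symm (h, ξ)))).1 = T i h ∧
      ((WithLp.equiv 2 _ (V i ((WithLp.equiv 2 _).symm (h, ξ)))).2 :
          ∀ _ : List (Fin n), ↥(Dsub DT)) []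
        = Dembed DT ((WithLp.equiv 2 (∀ _ : Fin n, H)).symm
            (fun j => if j = i then h else 0)) ∧
      ∀ (j : Fin n) (α : List (Fin n)),
        ((WithLp.equiv 2 _ (V i ((WithLp.equiv 2 _).symm (h, ξ)))).2 :
            ∀ _ : List (Fin n), ↥(Dsub DT)) (j :: α)
          = if j = i then (ξ : ∀ _ : List (Fin n), ↥(Dsub DT)) α else 0) :
    ∀ i j : Fin n,
      ContinuousLinearMap.adjoint (V i) ∘L V j = if i = j then 1 else 0 :=
  dilation_isometries_orthogonal_ranges_general T DT hDTpos hDTsq V hV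

end
end
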